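/- arXiv:2312.09565 — 3 statements merged into one kernel-verified Lean document; each statement's English description precedes it below -/
import Mathlib

section
/- Let X ⊆ ℝⁿ be compact, U ⊆ ℝᵐ be nonempty compact, h : ℝⁿ → ℝ be continuous, and ψ : ℝⁿ × ℝᵐ → ℝ be continuous (representing the estimated lower bound μ(x,u) - s·σ(x,u) of the true Lie derivative). Define the safe set C = {x ∈ X | h(x) ≥ 0} and suppose that for every x ∈ X with h(x) = 0 there exists u ∈ U with ψ(x,u) ≥ 0. Then there exists a class-K_e function γ̂ : ℝ → ℝ such that sup_{u ∈ U} ψ(x,u) ≥ - γ̂(h(x)) for every x ∈ C. -/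
open Set

/-- If the estimated Lie-derivative lower bound `ψ` admits, at every boundary
state (`x ∈ X` with `h x = 0`), an input `u ∈ U` with `ψ(x,u) ≥ 0`, then there exists a
class-K_e function `γ̂` such that `sup_{u ∈ U} ψ(x,u) ≥ -γ̂(h x)` for every `x` in the safe set
`C = {x ∈ X | h x ≥ 0}`. -/
theorem stmt_6 {n m : ℕ}
    (X : Set (EuclideanSpace ℝ (Fin n))) (U : Set (EuclideanSpace ℝ (Fin m)))
    (hX : IsCompact X) (hU : IsCompact U) (hUne : U.Nonempty)
    (h : EuclideanSpace ℝ (Fin n) → ℝ) (hh : Continuous h)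
    (ψ : EuclideanSpace ℝ (Fin n) × EuclideanSpace ℝ (Fin m) → ℝ) (hψ : Continuous ψ)
    (hbd : ∀ x ∈ X, h x = 0 → ∃ u ∈ U, 0 ≤ ψ (x, u)) :
    ∃ γhat : ℝ → ℝ, (Continuous γhat ∧ StrictMono γhat ∧ γhat 0 = 0) ∧
      ∀ x ∈ X, 0 ≤ h x → -γhat (h x) ≤ sSup ((fun u => ψ (x, u)) '' U) := by
  classical
  set F : EuclideanSpace ℝ (Fin n) → ℝ := fun x => sSup ((fun u => ψ (x, u)) '' U) with hF
  have hcontx : ∀ x, Continuous fun u : EuclideanSpace ℝ (Fin m) => ψ (x, u) := fun x =>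
    hψ.comp (Continuous.prodMk_right x)
  have hbdd : ∀ x, BddAbove ((fun u => ψ (x, u)) '' U) := fun x =>
    (hU.image (hcontx x)).bddAbove
  have hle : ∀ x, ∀ u ∈ U, ψ (x, u) ≤ F x := fun x u hu =>
    le_csSup (hbdd x) (mem_image_of_mem _ hu)
  -- boundary nonnegativity
  have hFbd : ∀ x ∈ X, h x = 0 → 0 ≤ F x := by
    intro x hx hx0
    obtain ⟨u, hu, hψu⟩ := hbd x hx hx0
    exact hψu.trans (hle x u hu)
  -- Key claim A : for every ε > 0 there is δ > 0 such that near the boundary F ≥ -ε.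
  have keyA : ∀ ε : ℝ, 0 < ε → ∃ δ : ℝ, 0 < δ ∧
      ∀ x ∈ X, 0 ≤ h x → h x ≤ δ → -ε ≤ F x := by
    intro ε hε
    set K : Set (EuclideanSpace ℝ (Fin n)) :=
      X ∩ ({x | 0 ≤ h x} ∩ ⋂ u ∈ U, {x | ψ (x, u) ≤ -ε}) with hK
    have hKcl : IsClosed ({x | 0 ≤ h x} ∩ ⋂ u ∈ U, {x | ψ (x, u) ≤ -ε}) := by
      refine (isClosed_le continuous_const hh).inter ?_
      refine isClosed_biInter fun u _ => ?_
      exact isClosed_le (hψ.comp (continuous_id.prodMk continuous_const)) continuous_const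
    have hKc : IsCompact K := hX.inter_right hKcl
    have hnK : ∀ x, x ∈ X → 0 ≤ h x → x ∉ K → -ε ≤ F x := by
      intro x hx h0 hxK
      have : ∃ u ∈ U, ¬ ψ (x, u) ≤ -ε := by
        by_contra hc
        push_neg at hc
        exact hxK ⟨hx, h0, mem_biInter hc⟩
      obtain ⟨u, hu, hu'⟩ := this
      exact (le_of_lt (not_le.mp hu')).trans (hle x u hu)
    rcases K.eq_empty_or_nonempty with hKe | hKne
    · exact ⟨1, one_pos, fun x hx h0 _ => hnK x hx h0 (by simp [hKe])⟩
    · obtain ⟨x₀, hx₀K, hx₀min⟩ := hKc.exists_isMinOn hKne hh.continuousOn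
      obtain ⟨hx₀X, hx₀0, hx₀ψ⟩ := hx₀K
      simp only [mem_setOf_eq] at hx₀0
      have hx₀pos : 0 < h x₀ := by
        rcases lt_or_eq_of_le hx₀0 with hp | he
        · exact hp
        · exfalso
          obtain ⟨u, hu, hψu⟩ := hbd x₀ hx₀X he.symm
          have := (mem_iInter₂.mp hx₀ψ) u hu
          simp only [mem_setOf_eq] at this
          linarith
      refine ⟨h x₀ / 2, by linarith, fun x hx h0 hxd => hnK x hx h0 fun hxK => ?_⟩
      have := hx₀min hxK
      simp only [mem_setOf_eq] at this
      linarith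
  -- Bound M
  obtain ⟨M, hM1, hMF⟩ : ∃ M : ℝ, 1 ≤ M ∧ ∀ x ∈ X, -M ≤ F x := by
    rcases X.eq_empty_or_nonempty with rfl | hXne
    · exact ⟨1, le_refl 1, fun x hx => absurd hx (notMem_empty x)⟩
    · obtain ⟨p, hp, hmin⟩ := (hX.prod hU).exists_isMinOn (hXne.prod hUne) hψ.continuousOn
      obtain ⟨u₀, hu₀⟩ := hUne
      refine ⟨max 1 (-(ψ p)), le_max_left _ _, fun x hx => ?_⟩
      have h1 : ψ p ≤ ψ (x, u₀) := hmin (mk_mem_prod hx hu₀)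
      have h2 : ψ (x, u₀) ≤ F x := hle x u₀ hu₀
      have h3 : -(max 1 (-(ψ p))) ≤ ψ p := by
        have := le_max_right 1 (-(ψ p))
        linarith
      linarith
  have hM0 : 0 < M := lt_of_lt_of_le one_pos hM1
  -- choose the sequence δ
  choose δs hδpos hδprop using fun k : ℕ => keyA (M * (1 / 2) ^ (k + 1)) (by positivity)
  set td : ℕ → ℝ := fun k => min (δs k) ((1 / 2 : ℝ) ^ k) with htd
  have htdpos : ∀ k, 0 < td k := fun k => lt_min (hδpos k) (by positivity)
  have htdle : ∀ k, td k ≤ (1 / 2 : ℝ) ^ k := fun k => min_le_right _ _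
  have htdδ : ∀ k, td k ≤ δs k := fun k => min_le_left _ _
  -- clamp function
  set c : ℕ → ℝ → ℝ := fun k t => min 1 (max (t / td k) 0) with hc
  have hc01 : ∀ k t, 0 ≤ c k t ∧ c k t ≤ 1 := fun k t =>
    ⟨le_min zero_le_one (le_max_right _ _), min_le_left _ _⟩
  have hcmono : ∀ k, Monotone (c k) := by
    intro k a b hab
    have hpos := htdpos k
    show min 1 (max (a / td k) 0) ≤ min 1 (max (b / td k) 0)
    gcongr
  have hccont : ∀ k, Continuous (c k) := by
    intro k
    exact continuous_const.min ((continuous_id.div_const _).max continuous_const)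
  have hc0 : ∀ k, c k 0 = 0 := by
    intro k
    simp [hc]
  -- the series terms
  set f : ℕ → ℝ → ℝ := fun k t => M * (1 / 2 : ℝ) ^ k * c k t with hf
  have hfnn : ∀ k t, 0 ≤ f k t := fun k t =>
    mul_nonneg (by positivity) (hc01 k t).1
  have hfle : ∀ k t, f k t ≤ M * (1 / 2 : ℝ) ^ k := by
    intro k t
    calc f k t ≤ M * (1 / 2 : ℝ) ^ k * 1 :=
          mul_le_mul_of_nonneg_left (hc01 k t).2 (by positivity)
      _ = M * (1 / 2 : ℝ) ^ k := mul_one _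
  have hgeo : Summable fun k : ℕ => M * (1 / 2 : ℝ) ^ k :=
    (summable_geometric_of_lt_one (by norm_num) (by norm_num)).mul_left M
  have hsum : ∀ t, Summable fun k => f k t := fun t =>
    Summable.of_nonneg_of_le (fun k => hfnn k t) (fun k => hfle k t) hgeo
  set S : ℝ → ℝ := fun t => ∑' k, f k t with hS
  set γ : ℝ → ℝ := fun t => t + S t with hγ
  have hScont : Continuous S := by
    refine continuous_tsum (fun k => continuous_const.mul (hccont k)) hgeo ?_
    intro k t
    rw [Real.norm_eq_abs, abs_of_nonneg (hfnn k t)]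
    exact hfle k t
  have hSmono : Monotone S := by
    intro a b hab
    exact Summable.tsum_le_tsum (fun k => mul_le_mul_of_nonneg_left (hcmono k hab) (by positivity))
      (hsum a) (hsum b)
  have hS0 : S 0 = 0 := by
    have hz : ∀ k : ℕ, f k 0 = 0 := by
      intro k
      show M * (1 / 2 : ℝ) ^ k * c k 0 = 0
      rw [hc0 k, mul_zero]
    show (∑' k, f k 0) = 0
    rw [tsum_congr hz, tsum_zero]
  have hSsingle : ∀ t k, f k t ≤ S t := fun t k =>
    Summable.le_tsum (hsum t) k fun j _ => hfnn j t
  refine ⟨γ, ⟨continuous_id.add hScont, ?_, by simp [hγ, hS0]⟩, ?_⟩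
  · intro a b hab
    exact add_lt_add_of_lt_of_le hab (hSmono hab.le)
  · intro x hx h0
    rw [neg_le]
    show -F x ≤ γ (h x)
    set t := h x with ht
    rcases eq_or_lt_of_le h0 with he | hpos
    · have := hFbd x hx he.symm
      have hγ0 : γ 0 = 0 := by simp [hγ, hS0]
      rw [← he, hγ0]
      linarith
    · -- find least k with td k < t
      have hex : ∃ k, td k < t := by
        obtain ⟨k, hk⟩ := exists_pow_lt_of_lt_one hpos (by norm_num : (1 / 2 : ℝ) < 1)
        exact ⟨k, lt_of_le_of_lt (htdle k) hk⟩
      set k := Nat.find hex with hkdef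
      have hkt : td k < t := Nat.find_spec hex
      have hkmin : ∀ j, j < k → ¬ td j < t := by
        intro j hj
        exact Nat.find_min hex (hkdef ▸ hj)
      have hck : c k t = 1 := by
        have h1 : (1 : ℝ) ≤ t / td k := (one_le_div (htdpos k)).mpr hkt.le
        have h2 : max (t / td k) 0 = t / td k := max_eq_left (by positivity)
        simp [hc, h2, min_eq_left h1]
      have hfk : f k t = M * (1 / 2 : ℝ) ^ k := by rw [hf]; simp [hck]
      have hγge : M * (1 / 2 : ℝ) ^ k ≤ γ t := by
        have := hSsingle t k
        rw [hfk] at this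
        have : M * (1 / 2 : ℝ) ^ k ≤ S t := this
        simp only [hγ]
        linarith
      refine le_trans ?_ hγge
      rw [neg_le]
      -- show -(M * (1/2)^k) ≤ F x, i.e. F x ≥ -(M*(1/2)^k)
      rcases Nat.eq_zero_or_pos k with hk0 | hkpos
      · -- k = 0 : use global bound
        have := hMF x hx
        have hM' : M * (1 / 2 : ℝ) ^ k = M := by rw [hk0]; simp
        rw [neg_le] at this ⊢
        rw [hM']
        linarith [hMF x hx]
      · obtain ⟨k', hk'⟩ := Nat.exists_eq_succ_of_ne_zero hkpos.ne'
        have hk'lt : k' < k := by omega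
        have hnotlt := hkmin k' hk'lt
        push_neg at hnotlt
        have hδ : t ≤ δs k' := hnotlt.trans (htdδ k')
        have h5 := hδprop k' x hx h0 hδ
        rw [neg_le] at h5 ⊢
        rw [hk']
        exact h5
end

section
/- Let X ⊆ ℝⁿ be compact, U ⊆ ℝᵐ be nonempty compact, h : ℝⁿ → ℝ be continuous, ψ : ℝⁿ × ℝᵐ → ℝ be continuous, and C = {x ∈ X | h(x) ≥ 0}. Let (Ω, F, P) be a probability space, δ ∈ (0,1], and for each (x,u) ∈ X × U let D_{x,u} : Ω → ℝ be a random variable (the uncertain true Lie derivative ḣ(x,u)) satisfying P({ω | D_{x,u}(ω) ≥ ψ(x,u)}) ≥ 1 - δ. Suppose that for every x ∈ X with h(x) = 0 there exists u ∈ U with ψ(x,u) ≥ 0. Then there exists a class-K_e function γ̂ : ℝ → ℝ such that for every x ∈ C there exists u ∈ U with P({ω | D_{x,u}(ω) ≥ - γ̂(h(x))}) ≥ 1 - δ. -/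
/-!
Let `ψ̄ x = max_{u ∈ U} ψ(x, u)`, which is continuous and attained. On the compact set `X` the
function `-ψ̄` is `≤ 0` where `h = 0`, so by compactness `-ψ̄ x < ε` as soon as `0 ≤ h x < η(ε)`.
Hence the envelope `φ r = sup {-ψ̄ x | x ∈ X, 0 ≤ h x ≤ r} ∪ {0}` is monotone, vanishes at `0` and
is continuous there. The average `r ↦ r + ∫₁² φ (r t) dt` smooths `φ` into a continuous,
strictly increasing function `γ̂` with `φ ≤ γ̂` on `[0, ∞)`, so `-γ̂ (h x) ≤ ψ̄ x = ψ(x, u)`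
for a maximizing `u`, and the calibration bound at `(x, u)` concludes.
-/

open Set MeasureTheory ProbabilityTheory Filter

def IsClassKe (γ : ℝ → ℝ) : Prop :=
  Continuous γ ∧ StrictMono γ ∧ γ 0 = 0

section Averaging

variable {φ : ℝ → ℝ}

/-- Away from `0` the discontinuities of `φ (r * ·)` form a countable set, so dominated
convergence applies; at `r = 0` continuity of `φ` at `0` is needed. -/
theorem continuous_integral_comp_mul (hφ : Monotone φ) (hφc : ContinuousAt φ 0) :
    Continuous fun r => ∫ t in (1 : ℝ)..2, φ (r * t) := by
  refine continuous_iff_continuousAt.2 fun r₀ => ?_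
  set R := 2 * (|r₀| + 1)
  refine intervalIntegral.continuousAt_of_dominated_interval
    (bound := fun _ => max |φ (-R)| |φ R|)
    (Eventually.of_forall fun r =>
      (hφ.measurable.comp (measurable_const_mul r)).aestronglyMeasurable)
    ?_ intervalIntegrable_const ?_
  · filter_upwards [Metric.ball_mem_nhds r₀ one_pos] with r hr
    refine Eventually.of_forall fun t ht => ?_
    rw [uIoc_of_le one_le_two] at ht
    rw [Metric.mem_ball, Real.dist_eq] at hr
    have hrt : |r * t| ≤ R := by
      rw [abs_mul, abs_of_pos (by linarith [ht.1] : 0 < t)]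
      nlinarith [abs_sub_abs_le_abs_sub r r₀, abs_nonneg r, ht.2]
    exact abs_le_max_abs_abs (hφ (neg_le_of_abs_le hrt)) (hφ (le_of_abs_le hrt))
  · rcases eq_or_ne r₀ 0 with rfl | hr₀
    · refine Eventually.of_forall fun t _ => ?_
      exact ContinuousAt.comp (f := fun r => r * t) (by simpa using hφc)
        (continuous_mul_const t).continuousAt
    · filter_upwards [(hφ.countable_not_continuousAt.preimage
        (mul_right_injective₀ hr₀)).ae_notMem volume] with t ht _
      exact ContinuousAt.comp (f := fun r => r * t) (not_not.1 ht)
        (continuous_mul_const t).continuousAt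

theorem exists_isClassKe_ge_of_monotone (hφ : Monotone φ) (hφc : ContinuousAt φ 0)
    (hφ0 : φ 0 = 0) : ∃ γ, IsClassKe γ ∧ ∀ r, 0 ≤ r → φ r ≤ γ r := by
  have hint (r : ℝ) : IntervalIntegrable (fun t => φ (r * t)) volume 1 2 := by
    rcases le_total 0 r with hr | hr
    · exact (hφ.comp (monotone_mul_left_of_nonneg hr)).intervalIntegrable
    · exact (hφ.comp_antitone (antitone_mul_left hr)).intervalIntegrable
  refine ⟨fun r => r + ∫ t in (1 : ℝ)..2, φ (r * t),
    ⟨continuous_id.add (continuous_integral_comp_mul hφ hφc), fun r s hrs => ?_, by simp [hφ0]⟩,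
    fun r hr => ?_⟩
  · refine add_lt_add_of_lt_of_le hrs
      (intervalIntegral.integral_mono_on one_le_two (hint r) (hint s) fun t ht => ?_)
    exact hφ (mul_le_mul_of_nonneg_right hrs.le (by linarith [ht.1]))
  · calc φ r = ∫ _ in (1 : ℝ)..2, φ r := by norm_num
      _ ≤ ∫ t in (1 : ℝ)..2, φ (r * t) :=
        intervalIntegral.integral_mono_on one_le_two (by simp) (hint r)
          fun t ht => hφ (le_mul_of_one_le_right hr ht.1)
      _ ≤ r + ∫ t in (1 : ℝ)..2, φ (r * t) := le_add_of_nonneg_left hr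

end Averaging

section Envelope

variable {α : Type*} {X : Set α} {h g : α → ℝ}

noncomputable def sublevelSup (X : Set α) (h g : α → ℝ) (r : ℝ) : ℝ :=
  sSup (insert 0 (g '' {x | x ∈ X ∧ 0 ≤ h x ∧ h x ≤ r}))

theorem bddAbove_sublevelSup_set (hg : BddAbove (g '' X)) (r : ℝ) :
    BddAbove (insert 0 (g '' {x | x ∈ X ∧ 0 ≤ h x ∧ h x ≤ r})) :=
  (hg.mono (image_mono fun _ hx => hx.1)).insert 0

theorem sublevelSup_nonneg (hg : BddAbove (g '' X)) (r : ℝ) : 0 ≤ sublevelSup X h g r :=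
  le_csSup (bddAbove_sublevelSup_set hg r) (mem_insert _ _)

theorem le_sublevelSup (hg : BddAbove (g '' X)) {x : α} (hx : x ∈ X) (h0 : 0 ≤ h x) :
    g x ≤ sublevelSup X h g (h x) :=
  le_csSup (bddAbove_sublevelSup_set hg _) (mem_insert_of_mem _ ⟨x, ⟨hx, h0, le_rfl⟩, rfl⟩)

theorem sublevelSup_le {r ε : ℝ} (hε : 0 ≤ ε) (H : ∀ x ∈ X, 0 ≤ h x → h x ≤ r → g x ≤ ε) :
    sublevelSup X h g r ≤ ε :=
  csSup_le (insert_nonempty _ _) <| forall_mem_insert.2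
    ⟨hε, forall_mem_image.2 fun x hx => H x hx.1 hx.2.1 hx.2.2⟩

theorem monotone_sublevelSup (hg : BddAbove (g '' X)) : Monotone (sublevelSup X h g) :=
  fun _ s hrs => csSup_le_csSup (bddAbove_sublevelSup_set hg s) (insert_nonempty _ _)
    (insert_subset_insert (image_mono fun _ hx => ⟨hx.1, hx.2.1, hx.2.2.trans hrs⟩))

theorem sublevelSup_zero (hg : BddAbove (g '' X)) (hbd : ∀ x ∈ X, h x = 0 → g x ≤ 0) :
    sublevelSup X h g 0 = 0 :=
  le_antisymm (sublevelSup_le le_rfl fun x hx h0 h0' => hbd x hx (le_antisymm h0' h0))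
    (sublevelSup_nonneg hg 0)

variable [TopologicalSpace α]

theorem IsCompact.exists_pos_forall_lt_of_boundary (hX : IsCompact X) (hh : Continuous h)
    (hg : Continuous g) (hbd : ∀ x ∈ X, h x = 0 → g x ≤ 0) {ε : ℝ} (hε : 0 < ε) :
    ∃ η > 0, ∀ x ∈ X, 0 ≤ h x → h x < η → g x < ε := by
  set K := X ∩ (h ⁻¹' Ici 0 ∩ g ⁻¹' Ici ε)
  have hK : IsCompact K :=
    hX.inter_right ((isClosed_Ici.preimage hh).inter (isClosed_Ici.preimage hg))
  have hpos : ∀ x ∈ K, 0 < h x := fun x ⟨hx, (h0 : 0 ≤ h x), (hεx : ε ≤ g x)⟩ =>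
    h0.lt_of_ne fun h0' => by linarith [hbd x hx h0'.symm]
  obtain ⟨η, hη, hηK⟩ := hK.exists_forall_le' hh.continuousOn hpos
  refine ⟨η, hη, fun x hx h0 hlt => ?_⟩
  by_contra! hεx
  exact (hηK x ⟨hx, h0, hεx⟩).not_gt hlt

theorem IsCompact.continuousAt_sublevelSup_zero (hX : IsCompact X) (hh : Continuous h)
    (hg : Continuous g) (hbd : ∀ x ∈ X, h x = 0 → g x ≤ 0) :
    ContinuousAt (sublevelSup X h g) 0 := by
  have hbdd : BddAbove (g '' X) := (hX.image hg).bddAbove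
  rw [ContinuousAt, sublevelSup_zero hbdd hbd, tendsto_order]
  refine ⟨fun a ha => Eventually.of_forall fun r => ha.trans_le (sublevelSup_nonneg hbdd r),
    fun a ha => ?_⟩
  obtain ⟨η, hη, hlt⟩ := hX.exists_pos_forall_lt_of_boundary hh hg hbd (half_pos ha)
  filter_upwards [Iio_mem_nhds hη] with r hr
  refine (sublevelSup_le (half_pos ha).le fun x hx h0 hxr => ?_).trans_lt (half_lt_self ha)
  exact (hlt x hx h0 (hxr.trans_lt hr)).le

theorem IsCompact.exists_isClassKe_bound (hX : IsCompact X) (hh : Continuous h)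
    (hg : Continuous g) (hbd : ∀ x ∈ X, h x = 0 → g x ≤ 0) :
    ∃ γ, IsClassKe γ ∧ ∀ x ∈ X, 0 ≤ h x → g x ≤ γ (h x) := by
  have hbdd : BddAbove (g '' X) := (hX.image hg).bddAbove
  obtain ⟨γ, hγ, hle⟩ := exists_isClassKe_ge_of_monotone (monotone_sublevelSup hbdd)
    (hX.continuousAt_sublevelSup_zero hh hg hbd) (sublevelSup_zero hbdd hbd)
  exact ⟨γ, hγ, fun x hx h0 => (le_sublevelSup hbdd hx h0).trans (hle _ h0)⟩

end Envelope

theorem stmt_7_general {n m : ℕ}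
    (X : Set (EuclideanSpace ℝ (Fin n))) (U : Set (EuclideanSpace ℝ (Fin m)))
    (hX : IsCompact X) (hU : IsCompact U) (hUne : U.Nonempty)
    (h : EuclideanSpace ℝ (Fin n) → ℝ) (hh : Continuous h)
    (ψ : EuclideanSpace ℝ (Fin n) × EuclideanSpace ℝ (Fin m) → ℝ) (hψ : Continuous ψ)
    {Ω : Type*} [MeasureSpace Ω]
    (δ : ℝ)
    (D : EuclideanSpace ℝ (Fin n) → EuclideanSpace ℝ (Fin m) → Ω → ℝ)
    (hcal : ∀ x ∈ X, ∀ u ∈ U,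
      ENNReal.ofReal (1 - δ) ≤ ℙ {ω | ψ (x, u) ≤ D x u ω})
    (hbd : ∀ x ∈ X, h x = 0 → ∃ u ∈ U, 0 ≤ ψ (x, u)) :
    ∃ γhat : ℝ → ℝ, (Continuous γhat ∧ StrictMono γhat ∧ γhat 0 = 0) ∧
      ∀ x ∈ X, 0 ≤ h x → ∃ u ∈ U,
        ENNReal.ofReal (1 - δ) ≤ ℙ {ω | -γhat (h x) ≤ D x u ω} := by
  set ψmax := fun x => sSup ((fun u => ψ (x, u)) '' U)
  have hψ_cont (x) : Continuous fun u => ψ (x, u) := hψ.comp (.prodMk_right x)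
  have hψ_le (x) (u) (hu : u ∈ U) : ψ (x, u) ≤ ψmax x :=
    le_csSup ((hU.image (hψ_cont x)).bddAbove) (mem_image_of_mem _ hu)
  have hψmax : Continuous ψmax := hU.continuous_sSup hψ
  obtain ⟨γ, hγ, hγψ⟩ := hX.exists_isClassKe_bound (g := fun x => -ψmax x) hh hψmax.neg
    fun x hx h0 => by
      obtain ⟨u, hu, hψu⟩ := hbd x hx h0
      linarith [hψ_le x u hu]
  refine ⟨γ, hγ, fun x hx h0 => ?_⟩
  obtain ⟨u, hu, hψu⟩ := hU.exists_sSup_image_eq hUne (hψ_cont x).continuousOn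
  refine ⟨u, hu, (hcal x hx u hu).trans (measure_mono fun ω (hω : ψ (x, u) ≤ D x u ω) => ?_)⟩
  have := hγψ x hx h0
  change -γ (h x) ≤ D x u ω
  linarith

/-- Suppose the true (uncertain) Lie derivative `D x u : Ω → ℝ` exceeds the
calibrated lower bound `ψ(x,u)` with probability at least `1 - δ` at every `(x,u) ∈ X × U`,
and at every boundary state (`x ∈ X`, `h x = 0`) some `u ∈ U` gives `ψ(x,u) ≥ 0`. Then there
is a class-K_e function `γ̂` such that for every `x` in the safe set `C = {x ∈ X | h x ≥ 0}`
there exists `u ∈ U` with `P(D x u ≥ -γ̂(h x)) ≥ 1 - δ`. -/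
theorem stmt_7 {n m : ℕ}
    (X : Set (EuclideanSpace ℝ (Fin n))) (U : Set (EuclideanSpace ℝ (Fin m)))
    (hX : IsCompact X) (hU : IsCompact U) (hUne : U.Nonempty)
    (h : EuclideanSpace ℝ (Fin n) → ℝ) (hh : Continuous h)
    (ψ : EuclideanSpace ℝ (Fin n) × EuclideanSpace ℝ (Fin m) → ℝ) (hψ : Continuous ψ)
    {Ω : Type*} [MeasureSpace Ω] [IsProbabilityMeasure (ℙ : Measure Ω)]
    (δ : ℝ) (hδ : δ ∈ Ioc (0 : ℝ) 1)
    (D : EuclideanSpace ℝ (Fin n) → EuclideanSpace ℝ (Fin m) → Ω → ℝ)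
    (hcal : ∀ x ∈ X, ∀ u ∈ U,
      ENNReal.ofReal (1 - δ) ≤ ℙ {ω | ψ (x, u) ≤ D x u ω})
    (hbd : ∀ x ∈ X, h x = 0 → ∃ u ∈ U, 0 ≤ ψ (x, u)) :
    ∃ γhat : ℝ → ℝ, (Continuous γhat ∧ StrictMono γhat ∧ γhat 0 = 0) ∧
      ∀ x ∈ X, 0 ≤ h x → ∃ u ∈ U,
        ENNReal.ofReal (1 - δ) ≤ ℙ {ω | -γhat (h x) ≤ D x u ω} :=
  stmt_7_general X U hX hU hUne h hh ψ hψ δ D hcal hbd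
end

section
/- Let M ≥ 2 be a natural number, α : Fin M → ℝ, and β : Fin M → ℝᵐ, with means ᾱ = (1/M)·Σᵢ αᵢ and β̄ = (1/M)·Σᵢ βᵢ. Define the ensemble variance σ²(u) = (1/(M-1))·Σᵢ ((αᵢ + ⟨βᵢ, u⟩) - (ᾱ + ⟨β̄, u⟩))² for u ∈ ℝᵐ. Then σ²(u) = ‖L u + l‖² for all u ∈ ℝᵐ, where L : ℝᵐ → ℝᴹ is the linear map whose i-th coordinate is (L u)ᵢ = ⟨βᵢ - β̄, u⟩ / √(M-1) and l ∈ ℝᴹ has coordinates lᵢ = (αᵢ - ᾱ)/√(M-1). Consequently u ↦ √(σ²(u)) = ‖L u + l‖ is a convex function of u. -/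
open scoped RealInnerProductSpace

theorem convexOn_norm_linearMap_add {E F : Type*} [AddCommGroup E] [Module ℝ E]
    [SeminormedAddCommGroup F] [NormedSpace ℝ F] (L : E →ₗ[ℝ] F) (l : F) :
    ConvexOn ℝ Set.univ (fun u => ‖L u + l‖) := by
  simpa [Function.comp_def, add_comm] using
    ((convexOn_norm convex_univ).translate_right l).comp_linearMap L

theorem one_div_mul_sum_sq_eq_sum_div_sqrt_sq {ι : Type*} (s : Finset ι) (a : ι → ℝ)
    {c : ℝ} (hc : 0 ≤ c) :
    1 / c * ∑ i ∈ s, a i ^ 2 = ∑ i ∈ s, (a i / √c) ^ 2 := by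
  simp only [Finset.mul_sum, div_pow, Real.sq_sqrt hc]
  ring_nf

theorem stmt_9_general {m : ℕ} (M : ℕ) (hM : 2 ≤ M)
    (α : Fin M → ℝ) (β : Fin M → EuclideanSpace ℝ (Fin m))
    (αbar : ℝ)
    (βbar : EuclideanSpace ℝ (Fin m))
    (σsq : EuclideanSpace ℝ (Fin m) → ℝ)
    (hσsq : ∀ u, σsq u =
      (1 / ((M : ℝ) - 1)) * ∑ i, ((α i + ⟪β i, u⟫) - (αbar + ⟪βbar, u⟫)) ^ 2)
    (L : EuclideanSpace ℝ (Fin m) →ₗ[ℝ] EuclideanSpace ℝ (Fin M))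
    (hL : ∀ u i, L u i = ⟪β i - βbar, u⟫ / Real.sqrt ((M : ℝ) - 1))
    (l : EuclideanSpace ℝ (Fin M))
    (hl : ∀ i, l i = (α i - αbar) / Real.sqrt ((M : ℝ) - 1)) :
    (∀ u, σsq u = ‖L u + l‖ ^ 2)
      ∧ ConvexOn ℝ Set.univ (fun u => Real.sqrt (σsq u)) := by
  have hM₁ : (0 : ℝ) ≤ (M : ℝ) - 1 := by
    have : (2 : ℝ) ≤ M := by exact_mod_cast hM
    linarith
  have hσ : ∀ u, σsq u = ‖L u + l‖ ^ 2 := fun u => by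
    rw [hσsq, one_div_mul_sum_sq_eq_sum_div_sqrt_sq _ _ hM₁, EuclideanSpace.real_norm_sq_eq]
    refine Finset.sum_congr rfl fun i _ => ?_
    rw [PiLp.add_apply, hL, hl, inner_sub_left]
    ring
  refine ⟨hσ, ?_⟩
  simpa only [hσ, Real.sqrt_sq (norm_nonneg _)] using convexOn_norm_linearMap_add L l

/-- For an ensemble of `M ≥ 2` control-affine approximators
`ḣᵢ(u) = αᵢ + ⟨βᵢ, u⟩` with means `ᾱ, β̄`, the ensemble variance
`σ²(u) = (1/(M-1)) Σᵢ ((αᵢ + ⟨βᵢ,u⟩) - (ᾱ + ⟨β̄,u⟩))²` satisfies `σ²(u) = ‖L u + l‖²`,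
where `(L u)ᵢ = ⟨βᵢ - β̄, u⟩ / √(M-1)` and `lᵢ = (αᵢ - ᾱ)/√(M-1)`; consequently
`u ↦ √(σ²(u)) = ‖L u + l‖` is convex. -/
theorem stmt_9 {m : ℕ} (M : ℕ) (hM : 2 ≤ M)
    (α : Fin M → ℝ) (β : Fin M → EuclideanSpace ℝ (Fin m))
    (αbar : ℝ) (hαbar : αbar = (1 / (M : ℝ)) * ∑ i, α i)
    (βbar : EuclideanSpace ℝ (Fin m)) (hβbar : βbar = ((M : ℝ)⁻¹) • ∑ i, β i)
    (σsq : EuclideanSpace ℝ (Fin m) → ℝ)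
    (hσsq : ∀ u, σsq u =
      (1 / ((M : ℝ) - 1)) * ∑ i, ((α i + ⟪β i, u⟫) - (αbar + ⟪βbar, u⟫)) ^ 2)
    (L : EuclideanSpace ℝ (Fin m) →ₗ[ℝ] EuclideanSpace ℝ (Fin M))
    (hL : ∀ u i, L u i = ⟪β i - βbar, u⟫ / Real.sqrt ((M : ℝ) - 1))
    (l : EuclideanSpace ℝ (Fin M))
    (hl : ∀ i, l i = (α i - αbar) / Real.sqrt ((M : ℝ) - 1)) :
    (∀ u, σsq u = ‖L u + l‖ ^ 2)
      ∧ ConvexOn ℝ Set.univ (fun u => Real.sqrt (σsq u)) :=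
  stmt_9_general M hM α β αbar βbar σsq hσsq L hL l hl
end
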